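/- arXiv:1903.08992 — 3 statements merged into one kernel-verified Lean document; each statement's English description precedes it below -/
import Mathlib

section
/- Let E be a real inner product space, let ξ_1, …, ξ_s (s ≥ 1) be orthonormal vectors in E, let T be a unit vector with ⟨T, ξ_α⟩ = c for the same real number c and every α = 1, …, s, and let q be a real number. Then ‖(1 − s c²)·Σ_{α=1}^s ξ_α + (s c − q)·(c·Σ_{α=1}^s ξ_α) + (q s c² − s c)·T‖² = (1 − s c²)·s·(1 − q c)², and consequently, if s c² ≤ 1, the quantity κ₂ = √(s c² q² − s c² s + s² c² − 2 s c q + s) equals √s·|1 − q c|. -/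
/-! The vector collapses to `(1 - q c) • (S - ⟪T, S⟫ • T)` with `S = Σ ξ_α`, i.e. a multiple of the
component of `S` orthogonal to the unit vector `T`. Since `‖S‖² = s` and `⟪T, S⟫ = s c`, that
component has squared norm `s - s² c²`, which gives the first identity; the radicand of `κ₂` is
`s (1 - q c)²`, which gives the second. -/

open scoped RealInnerProductSpace

section

variable {E : Type*} [NormedAddCommGroup E] [InnerProductSpace ℝ E]

theorem Orthonormal.norm_sum_sq {ι : Type*} [Fintype ι] {v : ι → E} (hv : Orthonormal ℝ v) :
    ‖∑ i, v i‖ ^ 2 = Fintype.card ι := by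
  classical
  rw [← real_inner_self_eq_norm_sq, sum_inner]
  simp [inner_sum, orthonormal_iff_ite.mp hv]

theorem norm_sub_inner_smul_sq {x y : E} (hy : ‖y‖ = 1) :
    ‖x - ⟪y, x⟫ • y‖ ^ 2 = ‖x‖ ^ 2 - ⟪y, x⟫ ^ 2 := by
  rw [norm_sub_sq_real, real_inner_smul_right, norm_smul, Real.norm_eq_abs, hy,
    real_inner_comm, mul_one, sq_abs]
  ring

end

theorem slant_curvature_kappa2_general {E : Type*} [NormedAddCommGroup E]
    [InnerProductSpace ℝ E] {s : ℕ} (ξ : Fin s → E)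
    (hξ : Orthonormal ℝ ξ) (T : E) (hT : ‖T‖ = 1) (c : ℝ)
    (hc : ∀ α : Fin s, ⟪T, ξ α⟫ = c) (q : ℝ) :
    (‖(1 - s * c ^ 2) • (∑ α : Fin s, ξ α) +
        (s * c - q) • (c • ∑ α : Fin s, ξ α) +
        (q * s * c ^ 2 - s * c) • T‖ ^ 2 =
      (1 - s * c ^ 2) * s * (1 - q * c) ^ 2) ∧
    ((s : ℝ) * c ^ 2 ≤ 1 →
      Real.sqrt ((s : ℝ) * c ^ 2 * q ^ 2 - s * c ^ 2 * s + s ^ 2 * c ^ 2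
          - 2 * s * c * q + s) =
        Real.sqrt s * |1 - q * c|) := by
  set S : E := ∑ α : Fin s, ξ α
  have hSS : ‖S‖ ^ 2 = s := by simpa using hξ.norm_sum_sq
  have hTS : ⟪T, S⟫ = s * c := by simp [S, inner_sum, hc]
  have hcollapse : (1 - s * c ^ 2) • S + (s * c - q) • (c • S) + (q * s * c ^ 2 - s * c) • T =
      (1 - q * c) • (S - ⟪T, S⟫ • T) := by
    rw [hTS]
    module
  refine ⟨?_, fun _ => ?_⟩
  · rw [hcollapse, norm_smul, mul_pow, norm_sub_inner_smul_sq hT, hSS, hTS, Real.norm_eq_abs,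
      sq_abs]
    ring
  · have hradicand : (s : ℝ) * c ^ 2 * q ^ 2 - s * c ^ 2 * s + s ^ 2 * c ^ 2 - 2 * s * c * q + s =
        s * (1 - q * c) ^ 2 := by ring
    rw [hradicand, Real.sqrt_mul s.cast_nonneg, Real.sqrt_sq_eq_abs]

/-- Slant case of the curvature computation: for orthonormal `ξ 1, …, ξ s`
(with `s ≥ 1`), a unit vector `T` with `⟪T, ξ α⟫ = c` for every `α`, and `q : ℝ`,
one has `‖(1 − sc²)·Σξ + (sc − q)·(c·Σξ) + (qsc² − sc)·T‖² = (1 − sc²)·s·(1 − qc)²`,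
and consequently, if `sc² ≤ 1`,
`√(sc²q² − sc²s + s²c² − 2scq + s) = √s·|1 − qc|`. -/
theorem slant_curvature_kappa2 {E : Type*} [NormedAddCommGroup E]
    [InnerProductSpace ℝ E] {s : ℕ} (hs : 1 ≤ s) (ξ : Fin s → E)
    (hξ : Orthonormal ℝ ξ) (T : E) (hT : ‖T‖ = 1) (c : ℝ)
    (hc : ∀ α : Fin s, ⟪T, ξ α⟫ = c) (q : ℝ) :
    (‖(1 - s * c ^ 2) • (∑ α : Fin s, ξ α) +
        (s * c - q) • (c • ∑ α : Fin s, ξ α) +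
        (q * s * c ^ 2 - s * c) • T‖ ^ 2 =
      (1 - s * c ^ 2) * s * (1 - q * c) ^ 2) ∧
    ((s : ℝ) * c ^ 2 ≤ 1 →
      Real.sqrt ((s : ℝ) * c ^ 2 * q ^ 2 - s * c ^ 2 * s + s ^ 2 * c ^ 2
          - 2 * s * c * q + s) =
        Real.sqrt s * |1 - q * c|) :=
  slant_curvature_kappa2_general ξ hξ T hT c hc q
end

section
/- Let λ ≠ 0, θ, h be real numbers, let n ≥ 1, and let a_i, b_i, c_i, d_i (i = 1,…,n) be real numbers. Set f_i(t) = −λ t + a_i, γ_i(t) = −(c_i/λ)·sin(f_i(t)) + b_i, and γ_{n+i}(t) = (c_i/λ)·cos(f_i(t)) + d_i. Then the function F(t) = 2 t cos θ − Σ_{i=1}^n [ (c_i²/(4λ²))·(sin(2 f_i(t)) + 2 f_i(t)) + (c_i d_i/λ)·sin(f_i(t)) ] + h satisfies F'(t) = 2 cos θ + Σ_{i=1}^n γ_i'(t)·γ_{n+i}(t) for all t. -/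
open scoped BigOperators

noncomputable def fAngle (lam a t : ℝ) : ℝ := -lam * t + a

noncomputable def gammaX (lam c a b t : ℝ) : ℝ :=
  -(c / lam) * Real.sin (fAngle lam a t) + b

noncomputable def gammaY (lam c a d t : ℝ) : ℝ :=
  (c / lam) * Real.cos (fAngle lam a t) + d

noncomputable def gammaZ (lam θ h : ℝ) (n : ℕ) (a c d : Fin n → ℝ) (t : ℝ) : ℝ :=
  2 * t * Real.cos θ -
    (∑ i : Fin n, ((c i) ^ 2 / (4 * lam ^ 2) *
        (Real.sin (2 * fAngle lam (a i) t) + 2 * fAngle lam (a i) t) +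
      (c i * d i / lam) * Real.sin (fAngle lam (a i) t))) + h

/-! Each summand of `F` has derivative `-γᵢ' γ_{n+i}`, by `cos (2f) + 1 = 2 cos² f`.
The derivative of `γᵢ` is kept in the form `(cᵢ/λ) λ cos fᵢ` rather than `cᵢ cos fᵢ`: the
identities below then hold as rational expressions in `λ`, so `ring` proves them without
`λ ≠ 0` (at `λ = 0` every term vanishes because `x / 0 = 0`). -/

open Real

lemma hasDerivAt_fAngle (lam a t : ℝ) : HasDerivAt (fAngle lam a) (-lam) t := by
  unfold fAngle
  simpa only [mul_one] using ((hasDerivAt_id' t).const_mul (-lam)).add_const a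

lemma hasDerivAt_gammaX (lam c a b t : ℝ) :
    HasDerivAt (gammaX lam c a b) (c / lam * lam * cos (fAngle lam a t)) t :=
  (((hasDerivAt_fAngle lam a t).sin.const_mul (-(c / lam))).add_const b).congr_deriv (by ring)

lemma hasDerivAt_gammaZ_summand (lam c a d t : ℝ) :
    HasDerivAt (fun t => c ^ 2 / (4 * lam ^ 2) *
        (sin (2 * fAngle lam a t) + 2 * fAngle lam a t) + (c * d / lam) * sin (fAngle lam a t))
      (-(c / lam * lam * cos (fAngle lam a t) * gammaY lam c a d t)) t := by
  have hf := hasDerivAt_fAngle lam a t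
  refine ((((hf.const_mul 2).sin.fun_add (hf.const_mul 2)).const_mul
    (c ^ 2 / (4 * lam ^ 2))).fun_add (hf.sin.const_mul (c * d / lam))).congr_deriv ?_
  rw [gammaY, cos_two_mul]
  ring

lemma hasDerivAt_gammaZ (lam θ h : ℝ) (n : ℕ) (a c d : Fin n → ℝ) (t : ℝ) :
    HasDerivAt (gammaZ lam θ h n a c d)
      (2 * cos θ + ∑ i : Fin n,
        c i / lam * lam * cos (fAngle lam (a i) t) * gammaY lam (c i) (a i) (d i) t) t := by
  have hlin : HasDerivAt (fun t : ℝ => 2 * t * cos θ) (2 * cos θ) t := by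
    simpa only [mul_one] using ((hasDerivAt_id' t).const_mul 2).mul_const (cos θ)
  have hsum := HasDerivAt.fun_sum (u := Finset.univ)
    fun i _ => hasDerivAt_gammaZ_summand lam (c i) (a i) (d i) t
  refine ((hlin.fun_sub hsum).add_const h).congr_deriv ?_
  simp only [Finset.sum_neg_distrib, sub_neg_eq_add]

theorem gammaZ_deriv_general (lam θ h : ℝ) (n : ℕ)
    (a b c d : Fin n → ℝ) :
    ∀ t, deriv (gammaZ lam θ h n a c d) t =
      2 * Real.cos θ +
        ∑ i : Fin n,
          deriv (gammaX lam (c i) (a i) (b i)) t * gammaY lam (c i) (a i) (d i) t := by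
  intro t
  simp only [(hasDerivAt_gammaZ lam θ h n a c d t).deriv,
    fun i => (hasDerivAt_gammaX lam (c i) (a i) (b i) t).deriv]

/-- The explicit antiderivative `F` from the paper's final theorem satisfies
`F'(t) = 2 cos θ + Σᵢ γᵢ'(t) γ_{n+i}(t)`. -/
theorem gammaZ_deriv (lam θ h : ℝ) (hlam : lam ≠ 0) (n : ℕ) (hn : 1 ≤ n)
    (a b c d : Fin n → ℝ) :
    ∀ t, deriv (gammaZ lam θ h n a c d) t =
      2 * Real.cos θ +
        ∑ i : Fin n,
          deriv (gammaX lam (c i) (a i) (b i)) t * gammaY lam (c i) (a i) (d i) t :=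
  gammaZ_deriv_general lam θ h n a b c d
end

section
/- Let n, s ≥ 1, let θ and q ≠ 0 be real numbers, set λ = −q + 2 s cos θ, and assume λ ≠ 0. Let γ = (γ_1,…,γ_{2n+s}) : ℝ → ℝ^{2n+s} be a twice differentiable curve. Then the following are equivalent. (I) For all t: γ_i''(t) = λ γ_{n+i}'(t) and γ_{n+i}''(t) = −λ γ_i'(t) for i = 1,…,n; γ_{2n+α}'(t) = 2 cos θ + Σ_{i=1}^n γ_i'(t) γ_{n+i}(t) for α = 1,…,s; and Σ_{i=1}^{2n} (γ_i'(t))² = 4(1 − s cos²θ). (II) There exist real numbers a_i, b_i, c_i, d_i (i = 1,…,n) and h_α (α = 1,…,s) with Σ_{i=1}^n c_i² = 4(1 − s cos²θ) such that, setting f_i(t) = −λ t + a_i, for all t: γ_i(t) = −(c_i/λ) sin(f_i(t)) + b_i, γ_{n+i}(t) = (c_i/λ) cos(f_i(t)) + d_i, and γ_{2n+α}(t) = 2 t cos θ − Σ_{i=1}^n [ (c_i²/(4λ²))(sin(2 f_i(t)) + 2 f_i(t)) + (c_i d_i/λ) sin(f_i(t)) ] + h_α. -/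
/-! The velocity `(γᵢ', γ_{n+i}')` of each coordinate pair solves `u' = λv, v' = −λu`, which
conserves `u² + v²`. Applied to its difference with `c (cos(−λt + a), sin(−λt + a))`, `(c, a)` the
polar coordinates of the initial velocity, this shows that the two agree. Integrating once gives the
circles, and the unit-speed condition becomes `Σ cᵢ² = 4(1 − s cos²θ)`. The slant condition then
prescribes `γ_{2n+α}'` explicitly, and the stated formula is an antiderivative of it
(via `2 cos² φ = 1 + cos 2φ`). -/

open Real

theorem exists_eq_add_of_hasDerivAt {f g f' : ℝ → ℝ} (hf : ∀ t, HasDerivAt f (f' t) t)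
    (hg : ∀ t, HasDerivAt g (f' t) t) : ∃ k, ∀ t, f t = g t + k := by
  obtain ⟨k, hk⟩ := isOpen_univ.exists_eq_add_of_deriv_eq isPreconnected_univ
    (fun t _ => (hf t).differentiableAt.differentiableWithinAt)
    (fun t _ => (hg t).differentiableAt.differentiableWithinAt)
    (fun t _ => (hf t).deriv.trans (hg t).deriv.symm)
  exact ⟨k, fun t => hk (Set.mem_univ t)⟩

section Phase

variable (lam a c : ℝ) (t : ℝ)

theorem hasDerivAt_phase : HasDerivAt (fun t => -lam * t + a) (-lam) t := by
  simpa using ((hasDerivAt_id t).const_mul (-lam)).add_const a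

theorem hasDerivAt_mul_cos_phase :
    HasDerivAt (fun t => c * cos (-lam * t + a)) (lam * (c * sin (-lam * t + a))) t := by
  exact (((hasDerivAt_cos _).comp t (hasDerivAt_phase lam a t)).const_mul c).congr_deriv (by ring)

theorem hasDerivAt_mul_sin_phase :
    HasDerivAt (fun t => c * sin (-lam * t + a)) (-lam * (c * cos (-lam * t + a))) t := by
  exact (((hasDerivAt_sin _).comp t (hasDerivAt_phase lam a t)).const_mul c).congr_deriv (by ring)

variable {lam}

theorem hasDerivAt_circle_fst (hlam : lam ≠ 0) (b : ℝ) :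
    HasDerivAt (fun t => -(c / lam) * sin (-lam * t + a) + b) (c * cos (-lam * t + a)) t :=
  ((hasDerivAt_mul_sin_phase lam a (-(c / lam)) t).add_const b).congr_deriv (by field_simp)

theorem hasDerivAt_circle_snd (hlam : lam ≠ 0) (d : ℝ) :
    HasDerivAt (fun t => c / lam * cos (-lam * t + a) + d) (c * sin (-lam * t + a)) t :=
  ((hasDerivAt_mul_cos_phase lam a (c / lam) t).add_const d).congr_deriv (by field_simp)

end Phase

theorem eq_zero_of_rotation_ode {lam : ℝ} {p r : ℝ → ℝ} (hp : ∀ t, HasDerivAt p (lam * r t) t)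
    (hr : ∀ t, HasDerivAt r (-lam * p t) t) (hp₀ : p 0 = 0) (hr₀ : r 0 = 0) (t : ℝ) :
    p t = 0 ∧ r t = 0 := by
  have hE : ∀ t, HasDerivAt (fun t => p t ^ 2 + r t ^ 2) 0 t := fun t =>
    (((hp t).pow 2).add ((hr t).pow 2)).congr_deriv (by ring)
  have hconst := is_const_of_deriv_eq_zero (fun t => (hE t).differentiableAt)
    (fun t => (hE t).deriv) t 0
  simp only [hp₀, hr₀] at hconst
  constructor <;> nlinarith [sq_nonneg (p t), sq_nonneg (r t)]

theorem exists_eq_mul_cos_sin_of_rotation_ode {lam : ℝ} {u v : ℝ → ℝ}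
    (hu : ∀ t, HasDerivAt u (lam * v t) t) (hv : ∀ t, HasDerivAt v (-lam * u t) t) :
    ∃ c a, ∀ t, u t = c * cos (-lam * t + a) ∧ v t = c * sin (-lam * t + a) := by
  set w : ℂ := ⟨u 0, v 0⟩
  refine ⟨‖w‖, w.arg, fun t => ?_⟩
  have h := eq_zero_of_rotation_ode (p := fun t => u t - ‖w‖ * cos (-lam * t + w.arg))
    (r := fun t => v t - ‖w‖ * sin (-lam * t + w.arg))
    (fun t => (hu t).sub (hasDerivAt_mul_cos_phase lam w.arg ‖w‖ t) |>.congr_deriv (by ring))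
    (fun t => (hv t).sub (hasDerivAt_mul_sin_phase lam w.arg ‖w‖ t) |>.congr_deriv (by ring))
    (by simp [Complex.norm_mul_cos_arg, w]) (by simp [Complex.norm_mul_sin_arg, w]) t
  exact ⟨sub_eq_zero.1 h.1, sub_eq_zero.1 h.2⟩

theorem exists_circle_of_rotation_ode {lam : ℝ} (hlam : lam ≠ 0) {x y : ℝ → ℝ}
    (hx : Differentiable ℝ x) (hx' : Differentiable ℝ (deriv x))
    (hy : Differentiable ℝ y) (hy' : Differentiable ℝ (deriv y))
    (hode : ∀ t, deriv (deriv x) t = lam * deriv y t ∧ deriv (deriv y) t = -lam * deriv x t) :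
    ∃ a b c d : ℝ, ∀ t, x t = -(c / lam) * sin (-lam * t + a) + b ∧
      y t = c / lam * cos (-lam * t + a) + d := by
  obtain ⟨c, a, hxy'⟩ := exists_eq_mul_cos_sin_of_rotation_ode
    (fun t => (hode t).1 ▸ (hx' t).hasDerivAt) (fun t => (hode t).2 ▸ (hy' t).hasDerivAt)
  obtain ⟨b, hb⟩ := exists_eq_add_of_hasDerivAt (fun t => (hxy' t).1 ▸ (hx t).hasDerivAt)
    (hasDerivAt_circle_fst a c · hlam 0)
  obtain ⟨d, hd⟩ := exists_eq_add_of_hasDerivAt (fun t => (hxy' t).2 ▸ (hy t).hasDerivAt)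
    (hasDerivAt_circle_snd a c · hlam 0)
  exact ⟨a, b, c, d, fun t => ⟨by simpa using hb t, by simpa using hd t⟩⟩

theorem deriv_of_circle {lam : ℝ} (hlam : lam ≠ 0) {x y : ℝ → ℝ} {a b c d : ℝ}
    (hxy : ∀ t, x t = -(c / lam) * sin (-lam * t + a) + b ∧
      y t = c / lam * cos (-lam * t + a) + d) (t : ℝ) :
    deriv x t = c * cos (-lam * t + a) ∧ deriv y t = c * sin (-lam * t + a) ∧
      deriv (deriv x) t = lam * (c * sin (-lam * t + a)) ∧
      deriv (deriv y) t = -lam * (c * cos (-lam * t + a)) := by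
  have hx : deriv x = fun t => c * cos (-lam * t + a) := by
    rw [funext fun t => (hxy t).1]
    exact funext fun t => (hasDerivAt_circle_fst a c t hlam b).deriv
  have hy : deriv y = fun t => c * sin (-lam * t + a) := by
    rw [funext fun t => (hxy t).2]
    exact funext fun t => (hasDerivAt_circle_snd a c t hlam d).deriv
  rw [hx, hy]
  exact ⟨rfl, rfl, (hasDerivAt_mul_cos_phase lam a c t).deriv,
    (hasDerivAt_mul_sin_phase lam a c t).deriv⟩

theorem sum_sq_mul_cos_add_sum_sq_mul_sin {ι : Type*} (s : Finset ι) (c φ : ι → ℝ) :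
    ∑ i ∈ s, (c i * cos (φ i)) ^ 2 + ∑ i ∈ s, (c i * sin (φ i)) ^ 2 = ∑ i ∈ s, c i ^ 2 := by
  rw [← Finset.sum_add_distrib]
  exact Finset.sum_congr rfl fun i _ => by linear_combination c i ^ 2 * cos_sq_add_sin_sq (φ i)

theorem hasDerivAt_slant_term {lam : ℝ} (hlam : lam ≠ 0) (a c d t : ℝ) :
    HasDerivAt (fun t => c ^ 2 / (4 * lam ^ 2) *
        (sin (2 * (-lam * t + a)) + 2 * (-lam * t + a)) + c * d / lam * sin (-lam * t + a))
      (-(c * cos (-lam * t + a) * (c / lam * cos (-lam * t + a) + d))) t := by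
  have hφ : HasDerivAt (fun t => 2 * (-lam * t + a)) (2 * -lam) t :=
    (hasDerivAt_phase lam a t).const_mul 2
  have h := ((((hasDerivAt_sin _).comp t hφ).add hφ).const_mul (c ^ 2 / (4 * lam ^ 2))).add
    (hasDerivAt_mul_sin_phase lam a (c * d / lam) t)
  refine h.congr_deriv ?_
  rw [cos_two_mul]
  field_simp
  ring

noncomputable def slantCoord {ι : Type*} [Fintype ι] (lam θ : ℝ) (a c d : ι → ℝ) (t : ℝ) : ℝ :=
  2 * t * cos θ - ∑ i, (c i ^ 2 / (4 * lam ^ 2) *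
    (sin (2 * (-lam * t + a i)) + 2 * (-lam * t + a i)) + c i * d i / lam * sin (-lam * t + a i))

theorem hasDerivAt_slantCoord {ι : Type*} [Fintype ι] {lam : ℝ} (hlam : lam ≠ 0) (θ : ℝ)
    (a c d : ι → ℝ) (t : ℝ) :
    HasDerivAt (slantCoord lam θ a c d) (2 * cos θ +
      ∑ i, c i * cos (-lam * t + a i) * (c i / lam * cos (-lam * t + a i) + d i)) t := by
  have h := (((hasDerivAt_id t).const_mul 2).mul_const (cos θ)).sub
    (HasDerivAt.fun_sum (u := Finset.univ) fun i _ =>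
      hasDerivAt_slant_term hlam (a i) (c i) (d i) t)
  exact h.congr_deriv (by simp [Finset.sum_neg_distrib])

theorem sum_deriv_mul_of_circle {ι : Type*} [Fintype ι] {lam : ℝ} (hlam : lam ≠ 0)
    {x y : ι → ℝ → ℝ} {a b c d : ι → ℝ}
    (hxy : ∀ i t, x i t = -(c i / lam) * sin (-lam * t + a i) + b i ∧
      y i t = c i / lam * cos (-lam * t + a i) + d i) (t : ℝ) :
    ∑ i, deriv (x i) t * y i t =
      ∑ i, c i * cos (-lam * t + a i) * (c i / lam * cos (-lam * t + a i) + d i) :=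
  Finset.sum_congr rfl fun i _ => by rw [(deriv_of_circle hlam (hxy i) t).1, (hxy i t).2]

theorem slant_magnetic_classification_a_general (n s : ℕ)
    (θ lam : ℝ) (hlam : lam ≠ 0)
    (γx γy : ℝ → Fin n → ℝ) (γz : ℝ → Fin s → ℝ)
    (hx : ∀ i, Differentiable ℝ fun t => γx t i)
    (hx' : ∀ i, Differentiable ℝ (deriv fun t => γx t i))
    (hy : ∀ i, Differentiable ℝ fun t => γy t i)
    (hy' : ∀ i, Differentiable ℝ (deriv fun t => γy t i))
    (hz : ∀ α, Differentiable ℝ fun t => γz t α) :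
    (∀ t,
      (∀ i : Fin n,
        deriv (deriv fun u => γx u i) t = lam * deriv (fun u => γy u i) t ∧
        deriv (deriv fun u => γy u i) t = -lam * deriv (fun u => γx u i) t) ∧
      (∀ α : Fin s,
        deriv (fun u => γz u α) t =
          2 * Real.cos θ + ∑ i : Fin n, deriv (fun u => γx u i) t * γy t i) ∧
      (∑ i : Fin n, (deriv (fun u => γx u i) t) ^ 2) +
        (∑ i : Fin n, (deriv (fun u => γy u i) t) ^ 2) =
        4 * (1 - s * Real.cos θ ^ 2)) ↔
    (∃ a b c d : Fin n → ℝ, ∃ h : Fin s → ℝ,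
      (∑ i : Fin n, (c i) ^ 2 = 4 * (1 - s * Real.cos θ ^ 2)) ∧
      ∀ t,
        (∀ i : Fin n,
          γx t i = -(c i / lam) * Real.sin (-lam * t + a i) + b i ∧
          γy t i = (c i / lam) * Real.cos (-lam * t + a i) + d i) ∧
        (∀ α : Fin s,
          γz t α = 2 * t * Real.cos θ -
            (∑ i : Fin n, ((c i) ^ 2 / (4 * lam ^ 2) *
                (Real.sin (2 * (-lam * t + a i)) + 2 * (-lam * t + a i)) +
              (c i * d i / lam) * Real.sin (-lam * t + a i))) + h α)) := by
  constructor
  · intro H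
    choose a b c d hxy using fun i => exists_circle_of_rotation_ode hlam (hx i) (hx' i) (hy i)
      (hy' i) fun t => (H t).1 i
    have hderiv i t := deriv_of_circle hlam (hxy i) t
    have hz_deriv : ∀ α t, HasDerivAt (γz · α) (2 * cos θ +
        ∑ i, c i * cos (-lam * t + a i) * (c i / lam * cos (-lam * t + a i) + d i)) t :=
      fun α t => by
        rw [← sum_deriv_mul_of_circle (x := fun i u => γx u i) hlam hxy, ← (H t).2.1 α]
        exact (hz α t).hasDerivAt
    choose h hh using fun α => exists_eq_add_of_hasDerivAt (hz_deriv α)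
      (hasDerivAt_slantCoord hlam θ a c d)
    refine ⟨a, b, c, d, h, ?_, fun t => ⟨fun i => hxy i t, fun α => hh α t⟩⟩
    rw [← sum_sq_mul_cos_add_sum_sq_mul_sin _ c fun i => -lam * 0 + a i, ← (H 0).2.2]
    simp only [fun i => (hderiv i 0).1, fun i => (hderiv i 0).2.1]
  · rintro ⟨a, b, c, d, h, hsum, hform⟩
    have hxy i t := (hform t).1 i
    have hderiv i t := deriv_of_circle hlam (hxy i) t
    intro t
    refine ⟨fun i => ⟨?_, ?_⟩, fun α => ?_, ?_⟩
    · rw [(hderiv i t).2.2.1, (hderiv i t).2.1]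
    · rw [(hderiv i t).2.2.2, (hderiv i t).1]
    · rw [sum_deriv_mul_of_circle (x := fun i u => γx u i) hlam hxy,
        funext fun t => (hform t).2 α]
      exact ((hasDerivAt_slantCoord hlam θ a c d t).add_const (h α)).deriv
    · simp only [fun i => (hderiv i t).1, fun i => (hderiv i t).2.1]
      rw [sum_sq_mul_cos_add_sum_sq_mul_sin, hsum]

/-- Part (a) of the classification of slant normal magnetic curves in
`ℝ^{2n+s}(−3s)`, in coordinate/ODE form, for `λ = −q + 2s cos θ ≠ 0`:
the system consisting of the Lorentz equations `γᵢ'' = λ γ_{n+i}'`,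
`γ_{n+i}'' = −λ γᵢ'`, the slant condition
`γ_{2n+α}' = 2cos θ + Σᵢ γᵢ' γ_{n+i}` and the unit-speed condition
`Σ_{i=1}^{2n}(γᵢ')² = 4(1 − s cos²θ)` holds iff the curve has the explicit
parametric form given in the paper. -/
theorem slant_magnetic_classification_a (n s : ℕ) (hn : 1 ≤ n) (hs : 1 ≤ s)
    (θ q lam : ℝ) (hq : q ≠ 0) (hlamdef : lam = -q + 2 * s * Real.cos θ)
    (hlam : lam ≠ 0)
    (γx γy : ℝ → Fin n → ℝ) (γz : ℝ → Fin s → ℝ)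
    (hx : ∀ i, Differentiable ℝ fun t => γx t i)
    (hx' : ∀ i, Differentiable ℝ (deriv fun t => γx t i))
    (hy : ∀ i, Differentiable ℝ fun t => γy t i)
    (hy' : ∀ i, Differentiable ℝ (deriv fun t => γy t i))
    (hz : ∀ α, Differentiable ℝ fun t => γz t α)
    (hz' : ∀ α, Differentiable ℝ (deriv fun t => γz t α)) :
    (∀ t,
      (∀ i : Fin n,
        deriv (deriv fun u => γx u i) t = lam * deriv (fun u => γy u i) t ∧
        deriv (deriv fun u => γy u i) t = -lam * deriv (fun u => γx u i) t) ∧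
      (∀ α : Fin s,
        deriv (fun u => γz u α) t =
          2 * Real.cos θ + ∑ i : Fin n, deriv (fun u => γx u i) t * γy t i) ∧
      (∑ i : Fin n, (deriv (fun u => γx u i) t) ^ 2) +
        (∑ i : Fin n, (deriv (fun u => γy u i) t) ^ 2) =
        4 * (1 - s * Real.cos θ ^ 2)) ↔
    (∃ a b c d : Fin n → ℝ, ∃ h : Fin s → ℝ,
      (∑ i : Fin n, (c i) ^ 2 = 4 * (1 - s * Real.cos θ ^ 2)) ∧
      ∀ t,
        (∀ i : Fin n,
          γx t i = -(c i / lam) * Real.sin (-lam * t + a i) + b i ∧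
          γy t i = (c i / lam) * Real.cos (-lam * t + a i) + d i) ∧
        (∀ α : Fin s,
          γz t α = 2 * t * Real.cos θ -
            (∑ i : Fin n, ((c i) ^ 2 / (4 * lam ^ 2) *
                (Real.sin (2 * (-lam * t + a i)) + 2 * (-lam * t + a i)) +
              (c i * d i / lam) * Real.sin (-lam * t + a i))) + h α)) :=
  slant_magnetic_classification_a_general n s θ lam hlam γx γy γz hx hx' hy hy' hz
end
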